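/- Fix an integer m ≥ 2 and a sequence ā = (a_1, a_2, …) with 0 < a_k ≤ 1/(m+1) for all k and liminf_{k→∞} a_k = 0, and let I_ā be the associated Cantor-like set. Then the product set E = I_ā × I_ā, as a compact subset of ℝ² (equivalently ℂ), is hereditarily non uniformly perfect. -/

import Mathlib

open MeasureTheory Filter Metric

/-- A compact set `F` with at least two points is uniformly perfect if there is `c > 0`
such that for every `a ∈ F` and every `r` with `0 < r < diam F` the annulus
`{y : c·r < ‖y − a‖ < r}` meets `F`. -/
def UniformlyPerfect {X : Type*} [NormedAddCommGroup X] (F : Set X) : Prop :=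
  IsCompact F ∧ F.Nontrivial ∧
    ∃ c : ℝ, 0 < c ∧ ∀ a ∈ F, ∀ r : ℝ, 0 < r → r < Metric.diam F →
      ∃ y ∈ F, c * r < ‖y - a‖ ∧ ‖y - a‖ < r

/-- A compact set is hereditarily non uniformly perfect (HNUP) if no (compact) subset
of it is uniformly perfect. -/
def HNUP {X : Type*} [NormedAddCommGroup X] (E : Set X) : Prop :=
  ∀ F : Set X, F ⊆ E → ¬ UniformlyPerfect F

/-- `A_k = a_1 ⋯ a_k` (with `A_0 = 1`). -/
noncomputable def cantorA (a : ℕ → ℝ) (k : ℕ) : ℝ := ∏ i ∈ Finset.Icc 1 k, a i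

/-- The Cantor-like set
`I_ā = { Σ_{k=1}^∞ d_k (A_{k−1} − A_k)/(m−1) : each d_k ∈ {0, 1, …, m−1} }`. -/
noncomputable def cantorLikeSet (m : ℕ) (a : ℕ → ℝ) : Set ℝ :=
  { x | ∃ d : ℕ → ℕ, (∀ k, d k < m) ∧
      x = ∑' k : ℕ, (d (k + 1) : ℝ) * (cantorA a k - cantorA a (k + 1)) / (m - 1) }

/-! Two points of `I_ā` whose digit sequences agree up to digit `k + 1` lie in a common interval
of level `k + 1`, so they are at most `A_{k+1}` apart. Otherwise their first differing digit has
index `j + 1 ≤ k + 1` and they are separated by a gap between adjacent level-`(j + 1)` intervals,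
of length `G_j = (A_j - m A_{j+1}) / (m - 1) ≥ G_k`. Applying this to both coordinates, no point
of `I_ā × I_ā` lies in the annulus `2 A_{k+1} < |z - w| < G_k` around a point `w` of the product.
Since `A_{k+1} / G_k = (m - 1) a_{k+1} / (1 - m a_{k+1})` is arbitrarily small along a
subsequence and `G_k → 0`, these empty annuli defeat every constant `c` of uniform perfectness. -/

open Finset Topology

lemma cantorA_zero (a : ℕ → ℝ) : cantorA a 0 = 1 := by simp [cantorA]

lemma cantorA_succ (a : ℕ → ℝ) (k : ℕ) : cantorA a (k + 1) = cantorA a k * a (k + 1) :=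
  prod_Icc_succ_top (Nat.le_add_left 1 k) a

section Products

variable {a : ℕ → ℝ} {r : ℝ}

lemma cantorA_pos (ha : ∀ k, 1 ≤ k → 0 < a k) (k : ℕ) : 0 < cantorA a k :=
  prod_pos fun i hi => ha i (mem_Icc.1 hi).1

lemma cantorA_succ_le (ha : ∀ k, 1 ≤ k → 0 < a k ∧ a k ≤ r) (k : ℕ) :
    cantorA a (k + 1) ≤ r * cantorA a k := by
  rw [cantorA_succ, mul_comm r]
  exact mul_le_mul_of_nonneg_left (ha (k + 1) k.succ_pos).2
    (cantorA_pos (fun i hi => (ha i hi).1) k).le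

lemma cantorA_antitone (ha : ∀ k, 1 ≤ k → 0 < a k ∧ a k ≤ r) (hr : r ≤ 1) :
    Antitone (cantorA a) :=
  antitone_nat_of_succ_le fun k => (cantorA_succ_le ha k).trans
    (mul_le_of_le_one_left (cantorA_pos (fun i hi => (ha i hi).1) k).le hr)

lemma cantorA_le_pow (ha : ∀ k, 1 ≤ k → 0 < a k ∧ a k ≤ r) (k : ℕ) :
    cantorA a k ≤ r ^ k := by
  have hr : 0 ≤ r := (ha 1 le_rfl).1.le.trans (ha 1 le_rfl).2
  induction k with
  | zero => simp [cantorA_zero]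
  | succ k ih =>
    calc cantorA a (k + 1) ≤ r * cantorA a k := cantorA_succ_le ha k
      _ ≤ r * r ^ k := mul_le_mul_of_nonneg_left ih hr
      _ = r ^ (k + 1) := (pow_succ' r k).symm

lemma tendsto_cantorA (ha : ∀ k, 1 ≤ k → 0 < a k ∧ a k ≤ r) (hr : r < 1) :
    Tendsto (cantorA a) atTop (𝓝 0) :=
  squeeze_zero (fun k => (cantorA_pos (fun i hi => (ha i hi).1) k).le) (cantorA_le_pow ha)
    (tendsto_pow_atTop_nhds_zero_of_lt_one ((ha 1 le_rfl).1.le.trans (ha 1 le_rfl).2) hr)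

end Products

section Series

variable {m : ℕ} {a : ℕ → ℝ} {d e : ℕ → ℕ}

noncomputable def cantorTerm (m : ℕ) (a : ℕ → ℝ) (d : ℕ → ℕ) (j : ℕ) : ℝ :=
  (d (j + 1) : ℝ) * (cantorA a j - cantorA a (j + 1)) / (m - 1)

lemma mem_cantorLikeSet {x : ℝ} :
    x ∈ cantorLikeSet m a ↔
      ∃ d : ℕ → ℕ, (∀ k, d k < m) ∧ x = ∑' j, cantorTerm m a d j :=
  Iff.rfl

lemma cast_sub_one_pos (hm : 1 < m) : (0 : ℝ) < m - 1 :=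
  sub_pos.2 (Nat.one_lt_cast.2 hm)

lemma cantorTerm_nonneg (hm : 1 < m) (hA : Antitone (cantorA a)) (d : ℕ → ℕ) (j : ℕ) :
    0 ≤ cantorTerm m a d j :=
  div_nonneg (mul_nonneg (Nat.cast_nonneg _) (sub_nonneg.2 (hA j.le_succ)))
    (cast_sub_one_pos hm).le

lemma cantorTerm_le (hm : 1 < m) (hA : Antitone (cantorA a)) (hd : ∀ k, d k < m) (j : ℕ) :
    cantorTerm m a d j ≤ cantorA a j - cantorA a (j + 1) := by
  have hdigit : (d (j + 1) : ℝ) ≤ m - 1 := by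
    rw [le_sub_iff_add_le]; exact_mod_cast hd (j + 1)
  rw [cantorTerm, div_le_iff₀ (cast_sub_one_pos hm), mul_comm _ ((m : ℝ) - 1)]
  exact mul_le_mul_of_nonneg_right hdigit (sub_nonneg.2 (hA j.le_succ))

lemma sum_range_cantorTerm_le (hm : 1 < m) (hA : Antitone (cantorA a))
    (hA0 : ∀ k, 0 ≤ cantorA a k) (hd : ∀ k, d k < m) (n N : ℕ) :
    ∑ j ∈ range N, cantorTerm m a d (j + n) ≤ cantorA a n :=
  calc ∑ j ∈ range N, cantorTerm m a d (j + n)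
      ≤ ∑ j ∈ range N, (cantorA a (j + n) - cantorA a (j + 1 + n)) :=
        sum_le_sum fun j _ => by
          simpa only [add_right_comm j 1 n] using cantorTerm_le hm hA hd (j + n)
    _ = cantorA a n - cantorA a (N + n) := by
        simpa using sum_range_sub' (fun j => cantorA a (j + n)) N
    _ ≤ cantorA a n := sub_le_self _ (hA0 _)

lemma summable_cantorTerm (hm : 1 < m) (hA : Antitone (cantorA a))
    (hA0 : ∀ k, 0 ≤ cantorA a k) (hd : ∀ k, d k < m) (n : ℕ) :
    Summable fun j => cantorTerm m a d (j + n) :=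
  summable_of_sum_range_le (fun _ => cantorTerm_nonneg hm hA d _)
    (sum_range_cantorTerm_le hm hA hA0 hd n)

lemma tsum_cantorTerm_le (hm : 1 < m) (hA : Antitone (cantorA a))
    (hA0 : ∀ k, 0 ≤ cantorA a k) (hd : ∀ k, d k < m) (n : ℕ) :
    ∑' j, cantorTerm m a d (j + n) ≤ cantorA a n :=
  Real.tsum_le_of_sum_range_le (fun _ => cantorTerm_nonneg hm hA d _)
    (sum_range_cantorTerm_le hm hA hA0 hd n)

lemma tsum_cantorTerm_eq (hm : 1 < m) (hA : Antitone (cantorA a))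
    (hA0 : ∀ k, 0 ≤ cantorA a k) (hd : ∀ k, d k < m) (n : ℕ) :
    ∑' j, cantorTerm m a d j =
      ∑ j ∈ range n, cantorTerm m a d j + ∑' j, cantorTerm m a d (j + n) :=
  (Summable.sum_add_tsum_nat_add n (summable_cantorTerm hm hA hA0 hd 0)).symm

lemma sum_range_cantorTerm_congr {n : ℕ} (hde : ∀ i < n, d (i + 1) = e (i + 1)) :
    ∑ j ∈ range n, cantorTerm m a d j = ∑ j ∈ range n, cantorTerm m a e j :=
  sum_congr rfl fun i hi => by simp only [cantorTerm, hde i (mem_range.1 hi)]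

lemma abs_tsum_cantorTerm_sub_le (hm : 1 < m) (hA : Antitone (cantorA a))
    (hA0 : ∀ k, 0 ≤ cantorA a k) (hd : ∀ k, d k < m) (he : ∀ k, e k < m) {n : ℕ}
    (hde : ∀ i < n, d (i + 1) = e (i + 1)) :
    |∑' j, cantorTerm m a d j - ∑' j, cantorTerm m a e j| ≤ cantorA a n := by
  rw [tsum_cantorTerm_eq hm hA hA0 hd n, tsum_cantorTerm_eq hm hA hA0 he n,
    sum_range_cantorTerm_congr hde, add_sub_add_left_eq_sub]
  exact abs_sub_le_of_nonneg_of_le (tsum_nonneg fun _ => cantorTerm_nonneg hm hA d _)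
    (tsum_cantorTerm_le hm hA hA0 hd n) (tsum_nonneg fun _ => cantorTerm_nonneg hm hA e _)
    (tsum_cantorTerm_le hm hA hA0 he n)

noncomputable def cantorGap (m : ℕ) (a : ℕ → ℝ) (k : ℕ) : ℝ :=
  (cantorA a k - m * cantorA a (k + 1)) / (m - 1)

lemma cantorGap_eq (hm : 1 < m) (k : ℕ) :
    cantorGap m a k = (cantorA a k - cantorA a (k + 1)) / (m - 1) - cantorA a (k + 1) := by
  have := (cast_sub_one_pos hm).ne'
  rw [cantorGap]; field_simp; ring

lemma cantorGap_le_tsum_cantorTerm_sub (hm : 1 < m) (hA : Antitone (cantorA a))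
    (hA0 : ∀ k, 0 ≤ cantorA a k) (hd : ∀ k, d k < m) (he : ∀ k, e k < m) {j : ℕ}
    (hde : ∀ i < j, d (i + 1) = e (i + 1)) (hlt : e (j + 1) < d (j + 1)) :
    cantorGap m a j ≤ ∑' i, cantorTerm m a d i - ∑' i, cantorTerm m a e i := by
  have hterm : (cantorA a j - cantorA a (j + 1)) / (m - 1) ≤
      cantorTerm m a d j - cantorTerm m a e j := by
    have hdigit : (e (j + 1) : ℝ) + 1 ≤ d (j + 1) := by exact_mod_cast hlt
    have hstep := sub_nonneg.2 (hA j.le_succ)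
    rw [cantorTerm, cantorTerm, ← sub_div, ← sub_mul]
    refine div_le_div_of_nonneg_right ?_ (cast_sub_one_pos hm).le
    nlinarith
  rw [tsum_cantorTerm_eq hm hA hA0 hd (j + 1), tsum_cantorTerm_eq hm hA hA0 he (j + 1),
    sum_range_succ, sum_range_succ, sum_range_cantorTerm_congr hde, cantorGap_eq hm]
  have htail_d : 0 ≤ ∑' i, cantorTerm m a d (i + (j + 1)) :=
    tsum_nonneg fun _ => cantorTerm_nonneg hm hA d _
  linarith [tsum_cantorTerm_le hm hA hA0 he (j + 1)]

end Series

section CantorSet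

variable {m : ℕ} {a : ℕ → ℝ}

lemma cantorGap_antitone (hm : 1 < m) (ha : ∀ k, 1 ≤ k → 0 < a k ∧ a k ≤ 1 / (m + 1)) :
    Antitone (cantorGap m a) := by
  refine antitone_nat_of_succ_le fun k =>
    div_le_div_of_nonneg_right ?_ (cast_sub_one_pos hm).le
  have hnext : 0 ≤ (m : ℝ) * cantorA a (k + 2) :=
    mul_nonneg (Nat.cast_nonneg m) (cantorA_pos (fun i hi => (ha i hi).1) _).le
  have hratio : ((m : ℝ) + 1) * cantorA a (k + 1) ≤ cantorA a k := by
    have h := cantorA_succ_le ha k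
    rwa [one_div_mul_eq_div, le_div_iff₀' (by positivity)] at h
  linarith

lemma abs_sub_le_or_cantorGap_le (hm : 1 < m)
    (ha : ∀ k, 1 ≤ k → 0 < a k ∧ a k ≤ 1 / (m + 1)) {x y : ℝ}
    (hx : x ∈ cantorLikeSet m a) (hy : y ∈ cantorLikeSet m a) (k : ℕ) :
    |x - y| ≤ cantorA a (k + 1) ∨ cantorGap m a k ≤ |x - y| := by
  obtain ⟨d, hd, rfl⟩ := mem_cantorLikeSet.1 hx
  obtain ⟨e, he, rfl⟩ := mem_cantorLikeSet.1 hy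
  have hA : Antitone (cantorA a) :=
    cantorA_antitone ha (div_le_one_of_le₀ (by simp) (by positivity))
  have hA0 : ∀ k, 0 ≤ cantorA a k := fun k => (cantorA_pos (fun i hi => (ha i hi).1) k).le
  by_cases hde : ∀ i < k + 1, d (i + 1) = e (i + 1)
  · exact Or.inl (abs_tsum_cantorTerm_sub_le hm hA hA0 hd he hde)
  push Not at hde
  obtain ⟨i, hik, hi⟩ := hde
  classical
  have hex : ∃ j, d (j + 1) ≠ e (j + 1) := ⟨i, hi⟩
  have hjk : Nat.find hex ≤ k := (Nat.find_min' hex hi).trans (Nat.lt_succ_iff.1 hik)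
  have hagree : ∀ i < Nat.find hex, d (i + 1) = e (i + 1) := fun i hi =>
    not_not.1 (Nat.find_min hex hi)
  refine Or.inr ((cantorGap_antitone hm ha hjk).trans ?_)
  rcases (Nat.find_spec hex).lt_or_gt with hlt | hgt
  · rw [abs_sub_comm]
    exact (cantorGap_le_tsum_cantorTerm_sub hm hA hA0 he hd
      (fun i hi => (hagree i hi).symm) hlt).trans (le_abs_self _)
  · exact (cantorGap_le_tsum_cantorTerm_sub hm hA hA0 hd he hagree hgt).trans (le_abs_self _)

lemma norm_sub_le_of_lt_cantorGap (hm : 1 < m)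
    (ha : ∀ k, 1 ≤ k → 0 < a k ∧ a k ≤ 1 / (m + 1)) {z w : ℂ}
    (hz : z.re ∈ cantorLikeSet m a ∧ z.im ∈ cantorLikeSet m a)
    (hw : w.re ∈ cantorLikeSet m a ∧ w.im ∈ cantorLikeSet m a) {k : ℕ}
    (h : ‖z - w‖ < cantorGap m a k) : ‖z - w‖ ≤ 2 * cantorA a (k + 1) := by
  have hre : |(z - w).re| ≤ cantorA a (k + 1) :=
    (abs_sub_le_or_cantorGap_le hm ha hz.1 hw.1 k).resolve_right
      ((Complex.abs_re_le_norm _).trans_lt h).not_ge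
  have him : |(z - w).im| ≤ cantorA a (k + 1) :=
    (abs_sub_le_or_cantorGap_le hm ha hz.2 hw.2 k).resolve_right
      ((Complex.abs_im_le_norm _).trans_lt h).not_ge
  linarith [Complex.norm_le_abs_re_add_abs_im (z - w)]

lemma tendsto_cantorGap (hA : Tendsto (cantorA a) atTop (𝓝 0)) :
    Tendsto (cantorGap m a) atTop (𝓝 0) := by
  have h := (hA.sub ((hA.comp (tendsto_add_atTop_nat 1)).const_mul (m : ℝ))).div_const
    ((m : ℝ) - 1)
  rw [mul_zero, sub_zero, zero_div] at h
  exact h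

lemma two_mul_cantorA_succ_lt_mul_cantorGap (hm : 1 < m) {k : ℕ} (hA : 0 < cantorA a k)
    {c : ℝ} (h : a (k + 1) * (2 * (m - 1) + c * m) < c) :
    2 * cantorA a (k + 1) < c * cantorGap m a k := by
  rw [cantorGap, cantorA_succ, mul_div_assoc', lt_div_iff₀ (cast_sub_one_pos hm)]
  nlinarith [mul_pos hA (sub_pos.2 h)]

lemma exists_cantorGap_scale (hm : 1 < m) (ha : ∀ k, 1 ≤ k → 0 < a k ∧ a k ≤ 1 / (m + 1))
    (hlim : liminf a atTop = 0) {c D : ℝ} (hc : 0 < c) (hD : 0 < D) :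
    ∃ k, 2 * cantorA a (k + 1) < c * cantorGap m a k ∧ cantorGap m a k < D := by
  have hden : 0 < 2 * ((m : ℝ) - 1) + c * m := by
    have := cast_sub_one_pos hm; positivity
  have hbdd : IsBoundedUnder (· ≤ ·) atTop a :=
    isBoundedUnder_of_eventually_le (eventually_atTop.2 ⟨1, fun k hk => (ha k hk).2⟩)
  have hsmall : ∃ᶠ n in atTop, a n < c / (2 * (m - 1) + c * m) :=
    frequently_lt_of_liminf_lt hbdd.isCoboundedUnder_ge (hlim ▸ div_pos hc hden)
  rw [← map_add_atTop_eq_nat 1, frequently_map] at hsmall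
  have hratio : 1 / ((m : ℝ) + 1) < 1 := by
    rw [div_lt_one (by positivity)]; norm_cast; omega
  have hlarge : ∀ᶠ k in atTop, cantorGap m a k < D :=
    (tendsto_cantorGap (tendsto_cantorA ha hratio)).eventually_lt_const hD
  obtain ⟨k, hak, hkD⟩ := (hsmall.and_eventually hlarge).exists
  refine ⟨k, two_mul_cantorA_succ_lt_mul_cantorGap hm
    (cantorA_pos (fun i hi => (ha i hi).1) k) ?_, hkD⟩
  rwa [lt_div_iff₀ hden] at hak

end CantorSet

/-- If `liminf a_k = 0` then `E = I_ā × I_ā`, as a compact subset of the plane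
(identified with `ℂ`), is HNUP. -/
theorem stmt11 (m : ℕ) (hm : 2 ≤ m) (a : ℕ → ℝ)
    (ha : ∀ k : ℕ, 1 ≤ k → 0 < a k ∧ a k ≤ 1 / (m + 1))
    (hlim : Filter.liminf a Filter.atTop = 0) :
    HNUP {z : ℂ | z.re ∈ cantorLikeSet m a ∧ z.im ∈ cantorLikeSet m a} := by
  rintro F hFE ⟨hFc, hFnt, c, hc, hup⟩
  obtain ⟨p, hp⟩ := hFnt.nonempty
  obtain ⟨k, hscale, hkD⟩ :=
    exists_cantorGap_scale hm ha hlim hc (diam_pos hFnt hFc.isBounded)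
  have hgap : 0 < cantorGap m a k := pos_of_mul_pos_right
    ((mul_pos two_pos (cantorA_pos (fun i hi => (ha i hi).1) _)).trans hscale) hc.le
  obtain ⟨y, hyF, hcy, hy⟩ := hup p hp _ hgap hkD
  linarith [norm_sub_le_of_lt_cantorGap hm ha (hFE hyF) (hFE hp) hy]
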